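/- For every real a ≥ 0, every integer n ≥ 1, all reals 0 ≤ α ≤ β and every x ≥ 0, the second central moment of the generalized Baskakov–Kantorovich–Stancu operator is T_{n,a}^{α,β}((t−x)²;x) = ((n+β²)/(n+β)²)·x² + ((n−(2α+1)β)/(n+β)²)·x + (a²/(n+β)²)·x²/(1+x)² − (2aβ/(n+β)²)·x²/(1+x) + (2a(1+α)/(n+β)²)·x/(1+x) + (3α²+3α+1)/(3(n+β)²). -/

import Mathlib

open MeasureTheory Filter

/-- Rising factorial `(n)_i = n(n+1)⋯(n+i−1)`, with `(n)_0 = 1`. -/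
noncomputable def risingFac (n i : ℕ) : ℝ := ∏ j ∈ Finset.range i, ((n : ℝ) + j)

/-- `p_k(n,a) = Σ_{i=0}^{k} C(k,i)·(n)_i·a^{k−i}`. -/
noncomputable def pCoef (n : ℕ) (a : ℝ) (k : ℕ) : ℝ :=
  ∑ i ∈ Finset.range (k + 1), (Nat.choose k i : ℝ) * risingFac n i * a ^ (k - i)

/-- Generalized Baskakov basis function `W_{n,k}^a(x)`. -/
noncomputable def W (n : ℕ) (a : ℝ) (k : ℕ) (x : ℝ) : ℝ :=
  Real.exp (-(a * x) / (1 + x)) * (pCoef n a k / (Nat.factorial k : ℝ)) * x ^ k /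
    (1 + x) ^ (k + n)

/-- Stancu-type operator `L_{n,a}^{α,β}(f;x) = Σ_k W_{n,k}^a(x) f((k+α)/(n+β))`. -/
noncomputable def Lop (n : ℕ) (a α β : ℝ) (f : ℝ → ℝ) (x : ℝ) : ℝ :=
  ∑' k : ℕ, W n a k x * f (((k : ℝ) + α) / ((n : ℝ) + β))

/-- Generalized Baskakov–Kantorovich–Stancu operator `T_{n,a}^{α,β}(f;x)`. -/
noncomputable def TKS (n : ℕ) (a α β : ℝ) (f : ℝ → ℝ) (x : ℝ) : ℝ :=
  ((n : ℝ) + β) *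
    ∑' k : ℕ, W n a k x *
      ∫ t in (((k : ℝ) + α) / ((n : ℝ) + β))..(((k : ℝ) + α + 1) / ((n : ℝ) + β)), f t

lemma risingFac_zero (n : ℕ) : risingFac n 0 = 1 := by simp [risingFac]

lemma risingFac_succ (n k : ℕ) : risingFac n (k + 1) = risingFac n k * ((n : ℝ) + k) := by
  simp [risingFac, Finset.prod_range_succ]

lemma risingFac_shift (n k : ℕ) : risingFac n (k + 1) = (n : ℝ) * risingFac (n + 1) k := by
  unfold risingFac
  rw [Finset.prod_range_succ']
  push_cast
  rw [add_zero, mul_comm]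
  congr 1
  apply Finset.prod_congr rfl
  intro j _
  ring

lemma risingFac_nonneg (n i : ℕ) : 0 ≤ risingFac n i := by
  apply Finset.prod_nonneg
  intro j _
  positivity

lemma sumRF (n k : ℕ) :
    ∑ i ∈ Finset.range (k + 1), risingFac n i / (Nat.factorial i : ℝ)
      = risingFac (n + 1) k / (Nat.factorial k : ℝ) := by
  induction k with
  | zero => simp [risingFac]
  | succ k ih =>
    rw [Finset.sum_range_succ, ih, risingFac_shift, risingFac_succ]
    have hk : ((Nat.factorial k : ℝ)) ≠ 0 := Nat.cast_ne_zero.mpr (Nat.factorial_ne_zero k)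
    have hfs : ((Nat.factorial (k + 1) : ℝ)) = ((k : ℝ) + 1) * (Nat.factorial k : ℝ) := by
      push_cast [Nat.factorial_succ]; ring
    rw [hfs]
    have hk1 : ((k : ℝ) + 1) ≠ 0 := by positivity
    field_simp
    push_cast; ring

lemma norm_eq_self_of_nonneg {f : ℕ → ℝ} (hf : ∀ i, 0 ≤ f i) : (fun i => ‖f i‖) = f :=
  funext fun i => Real.norm_of_nonneg (hf i)

lemma hasSum_RF (n : ℕ) {u : ℝ} (hu0 : 0 ≤ u) (hu1 : u < 1) :
    HasSum (fun i => risingFac n i / (Nat.factorial i : ℝ) * u ^ i) (((1 - u)⁻¹) ^ n) := by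
  induction n with
  | zero =>
    have hz : ∀ i, i ≠ 0 → risingFac 0 i / (Nat.factorial i : ℝ) * u ^ i = 0 := by
      intro i hi
      have : risingFac 0 i = 0 := by
        apply Finset.prod_eq_zero (Finset.mem_range.mpr (Nat.pos_of_ne_zero hi))
        simp
      simp [this]
    have h := hasSum_single (f := fun i => risingFac 0 i / (Nat.factorial i : ℝ) * u ^ i) 0 hz
    simpa [risingFac] using h
  | succ n ih =>
    set f : ℕ → ℝ := fun i => risingFac n i / (Nat.factorial i : ℝ) * u ^ i with hf
    set g : ℕ → ℝ := fun j => u ^ j with hg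
    have hfpos : ∀ i, 0 ≤ f i := by
      intro i
      apply mul_nonneg (div_nonneg (risingFac_nonneg n i) (Nat.cast_nonneg _)) (pow_nonneg hu0 i)
    have hgpos : ∀ j, 0 ≤ g j := fun j => pow_nonneg hu0 j
    have hgeo : HasSum g ((1 - u)⁻¹) := hasSum_geometric_of_lt_one hu0 hu1
    have hfn : Summable fun i => ‖f i‖ := by
      rw [norm_eq_self_of_nonneg hfpos]; exact ih.summable
    have hgn : Summable fun j => ‖g j‖ := by
      rw [norm_eq_self_of_nonneg hgpos]; exact hgeo.summable
    have hS : Summable fun k => ∑ kl ∈ Finset.HasAntidiagonal.antidiagonal k, f kl.1 * g kl.2 :=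
      (summable_norm_sum_mul_antidiagonal_of_summable_norm hfn hgn).of_norm
    have hval : (∑' k, ∑ kl ∈ Finset.HasAntidiagonal.antidiagonal k, f kl.1 * g kl.2)
        = ((1 - u)⁻¹) ^ n * (1 - u)⁻¹ := by
      rw [← tsum_mul_tsum_eq_tsum_sum_antidiagonal_of_summable_norm hfn hgn,
        ih.tsum_eq, hgeo.tsum_eq]
    have hprod : HasSum (fun k => ∑ kl ∈ Finset.HasAntidiagonal.antidiagonal k, f kl.1 * g kl.2)
        (((1 - u)⁻¹) ^ n * (1 - u)⁻¹) := hval ▸ hS.hasSum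
    have hcongr : ∀ k, (∑ kl ∈ Finset.HasAntidiagonal.antidiagonal k, f kl.1 * g kl.2)
        = risingFac (n + 1) k / (Nat.factorial k : ℝ) * u ^ k := by
      intro k
      rw [Finset.Nat.sum_antidiagonal_eq_sum_range_succ_mk]
      have : ∀ i ∈ Finset.range (k + 1),
          f i * g (k - i) = risingFac n i / (Nat.factorial i : ℝ) * u ^ k := by
        intro i hi
        have hik : i ≤ k := Nat.lt_succ_iff.mp (Finset.mem_range.mp hi)
        have hu : u ^ i * u ^ (k - i) = u ^ k := by
          rw [← pow_add, Nat.add_sub_cancel' hik]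
        simp only [hf, hg]
        rw [mul_assoc, hu]
      rw [Finset.sum_congr rfl this, ← Finset.sum_mul, sumRF]
    rw [pow_succ]
    rwa [funext hcongr] at hprod

lemma hasSum_expSeries (v : ℝ) :
    HasSum (fun j => v ^ j / (Nat.factorial j : ℝ)) (Real.exp v) := by
  rw [Real.exp_eq_exp_ℝ]
  exact NormedSpace.expSeries_div_hasSum_exp v

lemma hasSum_pCoef (n : ℕ) {a u : ℝ} (ha : 0 ≤ a) (hu0 : 0 ≤ u) (hu1 : u < 1) :
    HasSum (fun k => pCoef n a k / (Nat.factorial k : ℝ) * u ^ k)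
      (Real.exp (a * u) * ((1 - u)⁻¹) ^ n) := by
  set f : ℕ → ℝ := fun i => risingFac n i / (Nat.factorial i : ℝ) * u ^ i with hf
  set g : ℕ → ℝ := fun j => (a * u) ^ j / (Nat.factorial j : ℝ) with hg
  have hfpos : ∀ i, 0 ≤ f i := fun i =>
    mul_nonneg (div_nonneg (risingFac_nonneg n i) (Nat.cast_nonneg _)) (pow_nonneg hu0 i)
  have hgpos : ∀ j, 0 ≤ g j := fun j =>
    div_nonneg (pow_nonneg (mul_nonneg ha hu0) j) (Nat.cast_nonneg _)
  have hF : HasSum f (((1 - u)⁻¹) ^ n) := hasSum_RF n hu0 hu1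
  have hG : HasSum g (Real.exp (a * u)) := hasSum_expSeries (a * u)
  have hfn : Summable fun i => ‖f i‖ := by
    rw [norm_eq_self_of_nonneg hfpos]; exact hF.summable
  have hgn : Summable fun j => ‖g j‖ := by
    rw [norm_eq_self_of_nonneg hgpos]; exact hG.summable
  have hS : Summable fun k => ∑ kl ∈ Finset.HasAntidiagonal.antidiagonal k, f kl.1 * g kl.2 :=
    (summable_norm_sum_mul_antidiagonal_of_summable_norm hfn hgn).of_norm
  have hval : (∑' k, ∑ kl ∈ Finset.HasAntidiagonal.antidiagonal k, f kl.1 * g kl.2)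
      = Real.exp (a * u) * ((1 - u)⁻¹) ^ n := by
    rw [← tsum_mul_tsum_eq_tsum_sum_antidiagonal_of_summable_norm hfn hgn,
      hF.tsum_eq, hG.tsum_eq, mul_comm]
  have hprod : HasSum (fun k => ∑ kl ∈ Finset.HasAntidiagonal.antidiagonal k, f kl.1 * g kl.2)
      (Real.exp (a * u) * ((1 - u)⁻¹) ^ n) := hval ▸ hS.hasSum
  have hcongr : ∀ k, (∑ kl ∈ Finset.HasAntidiagonal.antidiagonal k, f kl.1 * g kl.2)
      = pCoef n a k / (Nat.factorial k : ℝ) * u ^ k := by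
    intro k
    rw [Finset.Nat.sum_antidiagonal_eq_sum_range_succ_mk, pCoef, Finset.sum_div,
      Finset.sum_mul]
    apply Finset.sum_congr rfl
    intro i hi
    have hik : i ≤ k := Nat.lt_succ_iff.mp (Finset.mem_range.mp hi)
    have hu : u ^ i * u ^ (k - i) = u ^ k := by
      rw [← pow_add, Nat.add_sub_cancel' hik]
    have hki : ((Nat.factorial i : ℝ)) ≠ 0 := Nat.cast_ne_zero.mpr (Nat.factorial_ne_zero i)
    have hkki : ((Nat.factorial (k - i) : ℝ)) ≠ 0 :=
      Nat.cast_ne_zero.mpr (Nat.factorial_ne_zero (k - i))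
    have hkk : ((Nat.factorial k : ℝ)) ≠ 0 := Nat.cast_ne_zero.mpr (Nat.factorial_ne_zero k)
    simp only [hf, hg]
    calc risingFac n i / (Nat.factorial i : ℝ) * u ^ i
          * ((a * u) ^ (k - i) / (Nat.factorial (k - i) : ℝ))
        = risingFac n i * a ^ (k - i) * (u ^ i * u ^ (k - i))
            / ((Nat.factorial i : ℝ) * (Nat.factorial (k - i) : ℝ)) := by
          rw [mul_pow]; ring
      _ = risingFac n i * a ^ (k - i) * u ^ k
            / ((Nat.factorial i : ℝ) * (Nat.factorial (k - i) : ℝ)) := by rw [hu]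
      _ = (Nat.choose k i : ℝ) * risingFac n i * a ^ (k - i) / (Nat.factorial k : ℝ)
            * u ^ k := by
          rw [Nat.cast_choose ℝ hik]
          field_simp
  rwa [funext hcongr] at hprod

lemma pCoef_succ (n : ℕ) (a : ℝ) (k : ℕ) :
    pCoef n a (k + 1) = a * pCoef n a k + (n : ℝ) * pCoef (n + 1) a k := by
  have key : ∀ i ∈ Finset.range (k + 1),
      ((Nat.choose (k + 1) (i + 1) : ℝ)) * risingFac n (i + 1) * a ^ (k + 1 - (i + 1))
        = (n : ℝ) * ((Nat.choose k i : ℝ) * risingFac (n + 1) i * a ^ (k - i))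
          + (Nat.choose k (i + 1) : ℝ) * (n : ℝ) * risingFac (n + 1) i * a ^ (k - i) := by
    intro i _
    rw [risingFac_shift, Nat.choose_succ_succ]
    have h1 : k + 1 - (i + 1) = k - i := by omega
    rw [h1]
    push_cast
    ring
  have step1 : pCoef n a (k + 1)
      = (∑ i ∈ Finset.range (k + 1),
          ((n : ℝ) * ((Nat.choose k i : ℝ) * risingFac (n + 1) i * a ^ (k - i))
            + (Nat.choose k (i + 1) : ℝ) * (n : ℝ) * risingFac (n + 1) i * a ^ (k - i)))
        + a ^ (k + 1) := by
    rw [pCoef, Finset.sum_range_succ']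
    rw [Finset.sum_congr rfl key]
    simp [risingFac_zero]
  rw [step1, Finset.sum_add_distrib, ← Finset.mul_sum]
  have h2 : (∑ i ∈ Finset.range (k + 1),
      (Nat.choose k i : ℝ) * risingFac (n + 1) i * a ^ (k - i)) = pCoef (n + 1) a k := rfl
  rw [h2]
  -- remaining: ∑ C(k,i+1) n rf(n+1,i) a^(k-i) + a^(k+1) = a * pCoef n a k
  have h3 : (∑ i ∈ Finset.range (k + 1),
        (Nat.choose k (i + 1) : ℝ) * (n : ℝ) * risingFac (n + 1) i * a ^ (k - i))
      + a ^ (k + 1) = a * pCoef n a k := by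
    rw [Finset.sum_range_succ, Nat.choose_succ_self]
    rw [pCoef, Finset.mul_sum, Finset.sum_range_succ']
    have h4 : ∀ i ∈ Finset.range k,
        a * ((Nat.choose k (i + 1) : ℝ) * risingFac n (i + 1) * a ^ (k - (i + 1)))
          = (Nat.choose k (i + 1) : ℝ) * (n : ℝ) * risingFac (n + 1) i * a ^ (k - i) := by
      intro i hi
      have hik : i < k := Finset.mem_range.mp hi
      have h5 : k - i = (k - (i + 1)) + 1 := by omega
      rw [risingFac_shift, h5, pow_succ]
      ring
    rw [Finset.sum_congr rfl (fun i hi => (h4 i hi).symm)]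
    simp [risingFac_zero, pow_succ]
    ring
  rw [← h3]
  ring

lemma fact_succ_cast (k : ℕ) :
    ((Nat.factorial (k + 1) : ℝ)) = ((k : ℝ) + 1) * (Nat.factorial k : ℝ) := by
  push_cast [Nat.factorial_succ]; ring

lemma hasSum_pCoef_k (n : ℕ) {a u : ℝ} (ha : 0 ≤ a) (hu0 : 0 ≤ u) (hu1 : u < 1) :
    HasSum (fun k : ℕ => (k : ℝ) * (pCoef n a k / (Nat.factorial k : ℝ) * u ^ k))
      (u * (a * (Real.exp (a * u) * ((1 - u)⁻¹) ^ n)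
        + (n : ℝ) * (Real.exp (a * u) * ((1 - u)⁻¹) ^ (n + 1)))) := by
  have h1 := hasSum_pCoef n ha hu0 hu1
  have h2 := hasSum_pCoef (n + 1) ha hu0 hu1
  have h3 := (h1.mul_left (u * a)).add (h2.mul_left (u * (n : ℝ)))
  have heq : ∀ k : ℕ,
      u * a * (pCoef n a k / (Nat.factorial k : ℝ) * u ^ k)
        + u * (n : ℝ) * (pCoef (n + 1) a k / (Nat.factorial k : ℝ) * u ^ k)
      = ((k + 1 : ℕ) : ℝ)
          * (pCoef n a (k + 1) / (Nat.factorial (k + 1) : ℝ) * u ^ (k + 1)) := by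
    intro k
    rw [pCoef_succ, fact_succ_cast, pow_succ]
    have hk : ((Nat.factorial k : ℝ)) ≠ 0 := Nat.cast_ne_zero.mpr (Nat.factorial_ne_zero k)
    have hk1 : ((k : ℝ) + 1) ≠ 0 := by positivity
    push_cast
    field_simp
  rw [funext heq] at h3
  have h4 := (hasSum_nat_add_iff
    (f := fun k : ℕ => (k : ℝ) * (pCoef n a k / (Nat.factorial k : ℝ) * u ^ k)) 1).mp h3
  have h5 : ∑ i ∈ Finset.range 1,
      (i : ℝ) * (pCoef n a i / (Nat.factorial i : ℝ) * u ^ i) = 0 := by simp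
  rw [h5, add_zero] at h4
  convert h4 using 1
  · rfl
  ring

lemma hasSum_pCoef_kk (n : ℕ) {a u : ℝ} (ha : 0 ≤ a) (hu0 : 0 ≤ u) (hu1 : u < 1) :
    HasSum (fun k : ℕ => (k : ℝ) * ((k : ℝ) - 1)
        * (pCoef n a k / (Nat.factorial k : ℝ) * u ^ k))
      (u ^ 2 * (a ^ 2 * (Real.exp (a * u) * ((1 - u)⁻¹) ^ n)
        + 2 * a * (n : ℝ) * (Real.exp (a * u) * ((1 - u)⁻¹) ^ (n + 1))
        + (n : ℝ) * ((n : ℝ) + 1) * (Real.exp (a * u) * ((1 - u)⁻¹) ^ (n + 2)))) := by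
  have h0 := hasSum_pCoef n ha hu0 hu1
  have h1 := hasSum_pCoef (n + 1) ha hu0 hu1
  have h2 := hasSum_pCoef (n + 2) ha hu0 hu1
  have h3 := ((h0.mul_left (u ^ 2 * a ^ 2)).add
      (h1.mul_left (u ^ 2 * (2 * a * (n : ℝ))))).add
    (h2.mul_left (u ^ 2 * ((n : ℝ) * ((n : ℝ) + 1))))
  have hrec : ∀ k : ℕ, pCoef n a (k + 2)
      = a ^ 2 * pCoef n a k + 2 * a * (n : ℝ) * pCoef (n + 1) a k
        + (n : ℝ) * ((n : ℝ) + 1) * pCoef (n + 2) a k := by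
    intro k
    have e1 := pCoef_succ n a (k + 1)
    have e2 := pCoef_succ n a k
    have e3 := pCoef_succ (n + 1) a k
    rw [e2, e3] at e1
    rw [e1]
    push_cast
    ring
  have heq : ∀ k : ℕ,
      u ^ 2 * a ^ 2 * (pCoef n a k / (Nat.factorial k : ℝ) * u ^ k)
        + u ^ 2 * (2 * a * (n : ℝ)) * (pCoef (n + 1) a k / (Nat.factorial k : ℝ) * u ^ k)
        + u ^ 2 * ((n : ℝ) * ((n : ℝ) + 1))
            * (pCoef (n + 2) a k / (Nat.factorial k : ℝ) * u ^ k)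
      = ((k + 2 : ℕ) : ℝ) * (((k + 2 : ℕ) : ℝ) - 1)
          * (pCoef n a (k + 2) / (Nat.factorial (k + 2) : ℝ) * u ^ (k + 2)) := by
    intro k
    rw [hrec, fact_succ_cast (k + 1), fact_succ_cast k]
    have hk : ((Nat.factorial k : ℝ)) ≠ 0 := Nat.cast_ne_zero.mpr (Nat.factorial_ne_zero k)
    have hk1 : ((k : ℝ) + 1) ≠ 0 := by positivity
    have hk2 : (((k : ℕ) : ℝ) + 1 + 1) ≠ 0 := by positivity
    push_cast
    field_simp
    ring
  rw [funext heq] at h3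
  have h4 := (hasSum_nat_add_iff
    (f := fun k : ℕ => (k : ℝ) * ((k : ℝ) - 1)
      * (pCoef n a k / (Nat.factorial k : ℝ) * u ^ k)) 2).mp h3
  have hz : ∑ i ∈ Finset.range 2,
      (i : ℝ) * ((i : ℝ) - 1) * (pCoef n a i / (Nat.factorial i : ℝ) * u ^ i) = 0 := by
    simp [Finset.sum_range_succ]
  rw [hz, add_zero] at h4
  convert h4 using 1
  · rfl
  ring

set_option maxHeartbeats 2000000 in
theorem Top_second_central_moment (a : ℝ) (ha : 0 ≤ a) (n : ℕ) (hn : 1 ≤ n) (α β : ℝ)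
    (hα : 0 ≤ α) (hαβ : α ≤ β) (x : ℝ) (hx : 0 ≤ x) :
    TKS n a α β (fun t => (t - x) ^ 2) x =
      (((n : ℝ) + β ^ 2) / ((n : ℝ) + β) ^ 2) * x ^ 2 +
        (((n : ℝ) - (2 * α + 1) * β) / ((n : ℝ) + β) ^ 2) * x +
        (a ^ 2 / ((n : ℝ) + β) ^ 2) * (x ^ 2 / (1 + x) ^ 2) -
        (2 * a * β / ((n : ℝ) + β) ^ 2) * (x ^ 2 / (1 + x)) +
        (2 * a * (1 + α) / ((n : ℝ) + β) ^ 2) * (x / (1 + x)) +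
        (3 * α ^ 2 + 3 * α + 1) / (3 * ((n : ℝ) + β) ^ 2) := by
  have hx1 : (0:ℝ) < 1 + x := by linarith
  have hx1' : (1:ℝ) + x ≠ 0 := ne_of_gt hx1
  have hu0 : 0 ≤ x / (1 + x) := div_nonneg hx hx1.le
  have hu1 : x / (1 + x) < 1 := by rw [div_lt_one hx1]; linarith
  have hinv : (1 - x / (1 + x))⁻¹ = 1 + x := by
    rw [show (1:ℝ) - x / (1 + x) = 1 / (1 + x) by field_simp; ring]
    simp
  have hβ : 0 ≤ β := le_trans hα hαβ
  have hn1 : (1:ℝ) ≤ (n:ℝ) := by exact_mod_cast hn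
  have hNpos : (0:ℝ) < (n:ℝ) + β := by linarith
  have hNne : ((n:ℝ) + β) ≠ 0 := ne_of_gt hNpos
  have hPne : ((1:ℝ) + x) ^ n ≠ 0 := pow_ne_zero n hx1'
  have h0 := hasSum_pCoef n ha hu0 hu1
  have h1 := hasSum_pCoef_k n ha hu0 hu1
  have h2 := hasSum_pCoef_kk n ha hu0 hu1
  rw [hinv] at h0 h1 h2
  -- names for the integral polynomial coefficients
  have hW : ∀ k : ℕ, W n a k x
      = (Real.exp (-(a * x) / (1 + x)) / (1 + x) ^ n)
        * (pCoef n a k / (Nat.factorial k : ℝ) * (x / (1 + x)) ^ k) := by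
    intro k
    unfold W
    rw [pow_add, div_pow]
    have hPk : ((1:ℝ) + x) ^ k ≠ 0 := pow_ne_zero k hx1'
    field_simp
  have hint : ∀ p q : ℝ, (∫ t in p..q, (t - x) ^ 2) = ((q - x) ^ 3 - (p - x) ^ 3) / 3 := by
    intro p q
    simp only [intervalIntegral.integral_comp_sub_right (fun t => t ^ 2) x, integral_pow]
    norm_num
  have hptw : ∀ k : ℕ,
      W n a k x * (∫ t in (((k : ℝ) + α) / ((n : ℝ) + β))..(((k : ℝ) + α + 1) / ((n : ℝ) + β)),
          (t - x) ^ 2)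
      = (Real.exp (-(a * x) / (1 + x)) / (1 + x) ^ n) * (1 / ((n:ℝ)+β)^3)
          * ((k : ℝ) * ((k : ℝ) - 1)
            * (pCoef n a k / (Nat.factorial k : ℝ) * (x / (1 + x)) ^ k))
        + (Real.exp (-(a * x) / (1 + x)) / (1 + x) ^ n)
            * (2 / ((n:ℝ)+β)^3 + 2 * (α/((n:ℝ)+β) - x) / ((n:ℝ)+β)^2)
          * ((k : ℝ) * (pCoef n a k / (Nat.factorial k : ℝ) * (x / (1 + x)) ^ k))
        + (Real.exp (-(a * x) / (1 + x)) / (1 + x) ^ n)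
            * ((α/((n:ℝ)+β) - x)^2/((n:ℝ)+β) + (α/((n:ℝ)+β) - x)/((n:ℝ)+β)^2
              + 1/(3*((n:ℝ)+β)^3))
          * (pCoef n a k / (Nat.factorial k : ℝ) * (x / (1 + x)) ^ k) := by
    intro k
    rw [hint, hW]
    have hIk : ((((k : ℝ) + α + 1) / ((n : ℝ) + β) - x) ^ 3
          - (((k : ℝ) + α) / ((n : ℝ) + β) - x) ^ 3) / 3
        = (1 / ((n:ℝ)+β)^3) * ((k : ℝ) * ((k : ℝ) - 1))
          + (2 / ((n:ℝ)+β)^3 + 2 * (α/((n:ℝ)+β) - x) / ((n:ℝ)+β)^2) * (k : ℝ)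
          + ((α/((n:ℝ)+β) - x)^2/((n:ℝ)+β) + (α/((n:ℝ)+β) - x)/((n:ℝ)+β)^2
              + 1/(3*((n:ℝ)+β)^3)) := by
      field_simp
      ring
    rw [hIk]
    ring
  have hT : HasSum
      (fun k : ℕ => W n a k x *
        ∫ t in (((k : ℝ) + α) / ((n : ℝ) + β))..(((k : ℝ) + α + 1) / ((n : ℝ) + β)),
          (t - x) ^ 2)
      ((Real.exp (-(a * x) / (1 + x)) / (1 + x) ^ n) * (1 / ((n:ℝ)+β)^3)
          * ((x / (1 + x)) ^ 2 * (a ^ 2 * (Real.exp (a * (x / (1 + x))) * (1 + x) ^ n)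
            + 2 * a * (n : ℝ) * (Real.exp (a * (x / (1 + x))) * (1 + x) ^ (n + 1))
            + (n : ℝ) * ((n : ℝ) + 1) * (Real.exp (a * (x / (1 + x))) * (1 + x) ^ (n + 2))))
        + (Real.exp (-(a * x) / (1 + x)) / (1 + x) ^ n)
            * (2 / ((n:ℝ)+β)^3 + 2 * (α/((n:ℝ)+β) - x) / ((n:ℝ)+β)^2)
          * ((x / (1 + x)) * (a * (Real.exp (a * (x / (1 + x))) * (1 + x) ^ n)
            + (n : ℝ) * (Real.exp (a * (x / (1 + x))) * (1 + x) ^ (n + 1))))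
        + (Real.exp (-(a * x) / (1 + x)) / (1 + x) ^ n)
            * ((α/((n:ℝ)+β) - x)^2/((n:ℝ)+β) + (α/((n:ℝ)+β) - x)/((n:ℝ)+β)^2
              + 1/(3*((n:ℝ)+β)^3))
          * (Real.exp (a * (x / (1 + x))) * (1 + x) ^ n)) := by
    have hsum := ((h2.mul_left ((Real.exp (-(a * x) / (1 + x)) / (1 + x) ^ n)
        * (1 / ((n:ℝ)+β)^3))).add
      (h1.mul_left ((Real.exp (-(a * x) / (1 + x)) / (1 + x) ^ n)
        * (2 / ((n:ℝ)+β)^3 + 2 * (α/((n:ℝ)+β) - x) / ((n:ℝ)+β)^2)))).add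
      (h0.mul_left ((Real.exp (-(a * x) / (1 + x)) / (1 + x) ^ n)
        * ((α/((n:ℝ)+β) - x)^2/((n:ℝ)+β) + (α/((n:ℝ)+β) - x)/((n:ℝ)+β)^2
          + 1/(3*((n:ℝ)+β)^3))))
    rwa [funext (fun k => (hptw k).symm)] at hsum
  unfold TKS
  rw [hT.tsum_eq]
  -- final algebra
  have hXY : Real.exp (-(a * x) / (1 + x)) * Real.exp (a * (x / (1 + x))) = 1 := by
    rw [← Real.exp_add, show -(a * x) / (1 + x) + a * (x / (1 + x)) = 0 by field_simp; ring]
    exact Real.exp_zero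
  have hXval : Real.exp (-(a * x) / (1 + x)) = (Real.exp (a * (x / (1 + x))))⁻¹ :=
    eq_inv_of_mul_eq_one_left hXY
  have hDS0 : (Real.exp (-(a * x) / (1 + x)) / (1 + x) ^ n) * (Real.exp (a * (x / (1 + x))) * (1 + x) ^ n) = 1 := by
    calc (Real.exp (-(a * x) / (1 + x)) / (1 + x) ^ n) * (Real.exp (a * (x / (1 + x))) * (1 + x) ^ n)
        = Real.exp (-(a * x) / (1 + x)) * Real.exp (a * (x / (1 + x))) * ((1 + x) ^ n / (1 + x) ^ n) := by ring
      _ = 1 := by rw [hXY, div_self hPne, mul_one]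
  have hDS1 : (Real.exp (-(a * x) / (1 + x)) / (1 + x) ^ n) * ((x / (1 + x)) * (a * (Real.exp (a * (x / (1 + x))) * (1 + x) ^ n) + (n : ℝ) * (Real.exp (a * (x / (1 + x))) * (1 + x) ^ (n + 1)))) = (x / (1 + x)) * (a + (n : ℝ) * (1 + x)) := by
    have hs : ((x / (1 + x)) * (a * (Real.exp (a * (x / (1 + x))) * (1 + x) ^ n) + (n : ℝ) * (Real.exp (a * (x / (1 + x))) * (1 + x) ^ (n + 1)))) = (Real.exp (a * (x / (1 + x))) * (1 + x) ^ n) * ((x / (1 + x)) * (a + (n : ℝ) * (1 + x))) := by rw [pow_succ]; ring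
    rw [hs, ← mul_assoc, hDS0, one_mul]
  have hDS2 : (Real.exp (-(a * x) / (1 + x)) / (1 + x) ^ n) * ((x / (1 + x)) ^ 2 * (a ^ 2 * (Real.exp (a * (x / (1 + x))) * (1 + x) ^ n) + 2 * a * (n : ℝ) * (Real.exp (a * (x / (1 + x))) * (1 + x) ^ (n + 1)) + (n : ℝ) * ((n : ℝ) + 1) * (Real.exp (a * (x / (1 + x))) * (1 + x) ^ (n + 2)))) = (x / (1 + x)) ^ 2 * (a ^ 2 + 2 * a * (n : ℝ) * (1 + x) + (n : ℝ) * ((n : ℝ) + 1) * (1 + x) ^ 2) := by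
    have hs : ((x / (1 + x)) ^ 2 * (a ^ 2 * (Real.exp (a * (x / (1 + x))) * (1 + x) ^ n) + 2 * a * (n : ℝ) * (Real.exp (a * (x / (1 + x))) * (1 + x) ^ (n + 1)) + (n : ℝ) * ((n : ℝ) + 1) * (Real.exp (a * (x / (1 + x))) * (1 + x) ^ (n + 2)))) = (Real.exp (a * (x / (1 + x))) * (1 + x) ^ n) * ((x / (1 + x)) ^ 2 * (a ^ 2 + 2 * a * (n : ℝ) * (1 + x) + (n : ℝ) * ((n : ℝ) + 1) * (1 + x) ^ 2)) := by
      rw [show n + 2 = n + 1 + 1 from rfl, pow_succ, pow_succ]; ring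
    rw [hs, ← mul_assoc, hDS0, one_mul]
  have e2 : (Real.exp (-(a * x) / (1 + x)) / (1 + x) ^ n) * (1 / ((n:ℝ)+β)^3) * ((x / (1 + x)) ^ 2 * (a ^ 2 * (Real.exp (a * (x / (1 + x))) * (1 + x) ^ n) + 2 * a * (n : ℝ) * (Real.exp (a * (x / (1 + x))) * (1 + x) ^ (n + 1)) + (n : ℝ) * ((n : ℝ) + 1) * (Real.exp (a * (x / (1 + x))) * (1 + x) ^ (n + 2)))) = (1 / ((n:ℝ)+β)^3) * ((x / (1 + x)) ^ 2 * (a ^ 2 + 2 * a * (n : ℝ) * (1 + x) + (n : ℝ) * ((n : ℝ) + 1) * (1 + x) ^ 2)) := by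
    rw [show (Real.exp (-(a * x) / (1 + x)) / (1 + x) ^ n) * (1 / ((n:ℝ)+β)^3) * ((x / (1 + x)) ^ 2 * (a ^ 2 * (Real.exp (a * (x / (1 + x))) * (1 + x) ^ n) + 2 * a * (n : ℝ) * (Real.exp (a * (x / (1 + x))) * (1 + x) ^ (n + 1)) + (n : ℝ) * ((n : ℝ) + 1) * (Real.exp (a * (x / (1 + x))) * (1 + x) ^ (n + 2)))) = (1 / ((n:ℝ)+β)^3) * ((Real.exp (-(a * x) / (1 + x)) / (1 + x) ^ n) * ((x / (1 + x)) ^ 2 * (a ^ 2 * (Real.exp (a * (x / (1 + x))) * (1 + x) ^ n) + 2 * a * (n : ℝ) * (Real.exp (a * (x / (1 + x))) * (1 + x) ^ (n + 1)) + (n : ℝ) * ((n : ℝ) + 1) * (Real.exp (a * (x / (1 + x))) * (1 + x) ^ (n + 2))))) by ring, hDS2]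
  have e1 : (Real.exp (-(a * x) / (1 + x)) / (1 + x) ^ n) * (2 / ((n:ℝ)+β)^3 + 2 * (α/((n:ℝ)+β) - x) / ((n:ℝ)+β)^2) * ((x / (1 + x)) * (a * (Real.exp (a * (x / (1 + x))) * (1 + x) ^ n) + (n : ℝ) * (Real.exp (a * (x / (1 + x))) * (1 + x) ^ (n + 1)))) = (2 / ((n:ℝ)+β)^3 + 2 * (α/((n:ℝ)+β) - x) / ((n:ℝ)+β)^2) * ((x / (1 + x)) * (a + (n : ℝ) * (1 + x))) := by
    rw [show (Real.exp (-(a * x) / (1 + x)) / (1 + x) ^ n) * (2 / ((n:ℝ)+β)^3 + 2 * (α/((n:ℝ)+β) - x) / ((n:ℝ)+β)^2) * ((x / (1 + x)) * (a * (Real.exp (a * (x / (1 + x))) * (1 + x) ^ n) + (n : ℝ) * (Real.exp (a * (x / (1 + x))) * (1 + x) ^ (n + 1)))) = (2 / ((n:ℝ)+β)^3 + 2 * (α/((n:ℝ)+β) - x) / ((n:ℝ)+β)^2) * ((Real.exp (-(a * x) / (1 + x)) / (1 + x) ^ n) * ((x / (1 + x)) * (a * (Real.exp (a * (x / (1 +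 x))) * (1 + x) ^ n) + (n : ℝ) * (Real.exp (a * (x / (1 + x))) * (1 + x) ^ (n + 1))))) by ring, hDS1]
  have e0 : (Real.exp (-(a * x) / (1 + x)) / (1 + x) ^ n) * ((α/((n:ℝ)+β) - x)^2/((n:ℝ)+β) + (α/((n:ℝ)+β) - x)/((n:ℝ)+β)^2 + 1/(3*((n:ℝ)+β)^3)) * (Real.exp (a * (x / (1 + x))) * (1 + x) ^ n) = ((α/((n:ℝ)+β) - x)^2/((n:ℝ)+β) + (α/((n:ℝ)+β) - x)/((n:ℝ)+β)^2 + 1/(3*((n:ℝ)+β)^3)) := by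
    rw [show (Real.exp (-(a * x) / (1 + x)) / (1 + x) ^ n) * ((α/((n:ℝ)+β) - x)^2/((n:ℝ)+β) + (α/((n:ℝ)+β) - x)/((n:ℝ)+β)^2 + 1/(3*((n:ℝ)+β)^3)) * (Real.exp (a * (x / (1 + x))) * (1 + x) ^ n) = ((α/((n:ℝ)+β) - x)^2/((n:ℝ)+β) + (α/((n:ℝ)+β) - x)/((n:ℝ)+β)^2 + 1/(3*((n:ℝ)+β)^3)) * ((Real.exp (-(a * x) / (1 + x)) / (1 + x) ^ n) * (Real.exp (a * (x / (1 + x))) * (1 + x) ^ n)) by ring, hDS0, mul_one]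
  rw [e2, e1, e0]
  rw [show x^2/(1+x)^2 = (x/(1+x))^2 by rw [div_pow],
      show x^2/(1+x) = x/(1+x)*x by ring]
  set u := x / (1 + x) with hudef
  have hu : u * (1 + x) = x := div_mul_cancel₀ x hx1'
  rw [show u ^ 2 * (a ^ 2 + 2 * a * (n : ℝ) * (1 + x) + (n : ℝ) * ((n : ℝ) + 1) * (1 + x) ^ 2)
        = a^2*u^2 + 2*a*(n:ℝ)*(u*(1+x))*u + (n:ℝ)*((n:ℝ)+1)*(u*(1+x))^2 by ring,
      show u * (a + (n : ℝ) * (1 + x)) = a*u + (n:ℝ)*(u*(1+x)) by ring, hu]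
  field_simp
  ring
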